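/- Let d ≥ 2 and m ≥ 2. Then Ṡ_m(ℝ^d_+) is the internal direct sum V_m^{(1)} ⊕ V_m^{(2)} of the subspaces V_m^{(1)} = {(S[p],p) : p ∈ 𝒜̇_{m-1}(ℝ^d)} and V_m^{(2)} = {(u,p) ∈ Ṡ_m(ℝ^d_+) : p = 0}; that is, every (u,p) ∈ Ṡ_m(ℝ^d_+) can be written uniquely as (u,p) = (S[p],p) + (v,0) with (v,0) ∈ Ṡ_m(ℝ^d_+). -/

import Mathlib

open MvPolynomial

noncomputable section

/-- The horizontal Laplacian `Δ' = ∂_1² + ⋯ + ∂_{d-1}²` acting on polynomials on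
`ℝ^d = ℝ^{n+1}`, where the last variable is `y`. -/
def lapX (n : ℕ) : Module.End ℝ (MvPolynomial (Fin (n + 1)) ℝ) :=
  ∑ i : Fin n,
    ((pderiv (R := ℝ) i.castSucc).toLinearMap ∘ₗ (pderiv (R := ℝ) i.castSucc).toLinearMap)

/-- The full Laplacian `Δ = Δ' + ∂_y²`. -/
def lapFull (n : ℕ) : Module.End ℝ (MvPolynomial (Fin (n + 1)) ℝ) :=
  lapX n +
    ((pderiv (R := ℝ) (Fin.last n)).toLinearMap ∘ₗ (pderiv (R := ℝ) (Fin.last n)).toLinearMap)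

/-- The operator `Δ_D^{-1}`, determined on a monomial `x^α y^l` by
`Δ_D^{-1}(x^α y^l) = Σ_{j≥0} ((-1)^j l!/(l+2j+2)!) ((Δ')^j x^α) y^{l+2j+2}`
(a finite sum: the terms with `2j > |α|` vanish, so truncating the sum at the total
degree of the monomial loses nothing), extended linearly. -/
def deltaDInv (n : ℕ) (p : MvPolynomial (Fin (n + 1)) ℝ) : MvPolynomial (Fin (n + 1)) ℝ :=
  ∑ σ ∈ p.support,
    ∑ j ∈ Finset.range ((σ.sum fun _ e => e) + 1),
      (coeff σ p * ((-1 : ℝ) ^ j * ((σ (Fin.last n)).factorial : ℝ) /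
          ((σ (Fin.last n) + 2 * j + 2).factorial : ℝ))) •
        (((lapX n) ^ j) (monomial (σ.erase (Fin.last n)) (1 : ℝ)) *
          (X (Fin.last n)) ^ (σ (Fin.last n) + 2 * j + 2))


/-- The substitution `y ↦ 0`: it sends `f(x,y)` to the polynomial `(x,y) ↦ f(x,0)`. -/
def setY0 (n : ℕ) : MvPolynomial (Fin (n + 1)) ℝ →ₐ[ℝ] MvPolynomial (Fin (n + 1)) ℝ :=
  aeval (fun i => if i = Fin.last n then 0 else X i)

/-- Integration in the first variable from `0` to `x₁`:
`(intX0 g)(x) = ∫_0^{x₁} g(z, x₂, …) dz`, given termwise on monomials by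
`∫_0^{x₁} x₁^k dx₁ = x₁^{k+1}/(k+1)`. -/
def intX0 (n : ℕ) (g : MvPolynomial (Fin (n + 1)) ℝ) : MvPolynomial (Fin (n + 1)) ℝ :=
  ∑ σ ∈ g.support,
    (coeff σ g / ((σ 0 : ℝ) + 1)) • monomial (σ + Finsupp.single 0 1) (1 : ℝ)

/-- `c_{m-1}(x) = -∫_0^{x₁} (∂_y p)(z, x₂,…,x_{d-1}, 0) dz`. -/
def cpoly (n : ℕ) (p : MvPolynomial (Fin (n + 1)) ℝ) : MvPolynomial (Fin (n + 1)) ℝ :=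
  - intX0 n (setY0 n (pderiv (R := ℝ) (Fin.last n) p))

/-- `V₁(x,y) = Σ_{j≥0} ((-1)^j/(2j+1)!) ((Δ')^j c_{m-1})(x) y^{2j+1}` (a finite sum:
all terms with `j > m` vanish, so we truncate at `m`). -/
def V1 (n m : ℕ) (p : MvPolynomial (Fin (n + 1)) ℝ) : MvPolynomial (Fin (n + 1)) ℝ :=
  ∑ j ∈ Finset.range (m + 1),
    ((-1 : ℝ) ^ j / ((2 * j + 1).factorial : ℝ)) •
      (((lapX n) ^ j) (cpoly n p) * (X (Fin.last n)) ^ (2 * j + 1))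

/-- The map `S[p] = U + V = Δ_D^{-1}∇p + (V₁,0,…,0)`. -/
def Smap (n m : ℕ) (p : MvPolynomial (Fin (n + 1)) ℝ) :
    Fin (n + 1) → MvPolynomial (Fin (n + 1)) ℝ :=
  fun k => deltaDInv n (pderiv (R := ℝ) k p) +
    (if k = (0 : Fin (n + 1)) then V1 n m p else 0)

/-- `(u,p) ∈ Ṡ_m(ℝ^d_+)`: `u ∈ 𝒫̇_m(ℝ^d)^d`, `p ∈ 𝒫̇_{m-1}(ℝ^d)`, and `(u,p)` solves the
Stokes system (SH): `-Δu + ∇p = 0`, `∇·u = 0` (in `ℝ^d_+`, equivalently as polynomial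
identities), and `u(x,0) = 0` for all `x ∈ ℝ^{d-1}`. -/
def IsDotStokes (n m : ℕ) (u : Fin (n + 1) → MvPolynomial (Fin (n + 1)) ℝ)
    (p : MvPolynomial (Fin (n + 1)) ℝ) : Prop :=
  (∀ k, (u k).IsHomogeneous m) ∧ p.IsHomogeneous (m - 1) ∧
  (∀ k, - lapFull n (u k) + pderiv (R := ℝ) k p = 0) ∧
  (∑ k : Fin (n + 1), pderiv (R := ℝ) k (u k)) = 0 ∧
  (∀ (x : Fin n → ℝ) (k : Fin (n + 1)), eval (Fin.snoc x 0) (u k) = 0)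

section Helpers

open Finset

variable {n : ℕ}

lemma my_pderiv_comm {σ : Type*} (i j : σ) (f : MvPolynomial σ ℝ) :
    pderiv (R := ℝ) i (pderiv (R := ℝ) j f) = pderiv (R := ℝ) j (pderiv (R := ℝ) i f) := by
  classical
  rw [f.as_sum, map_sum, map_sum, map_sum, map_sum]
  refine Finset.sum_congr rfl fun s _ => ?_
  rcases eq_or_ne i j with rfl | hij
  · rfl
  · simp only [pderiv_monomial]
    rw [Finsupp.tsub_apply, Finsupp.tsub_apply, Finsupp.single_eq_of_ne hij,
      Finsupp.single_eq_of_ne (Ne.symm hij), tsub_zero, tsub_zero, tsub_right_comm]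
    ring_nf

lemma degree_add (a b : Fin (n+1) →₀ ℕ) :
    Finsupp.degree (a + b) = Finsupp.degree a + Finsupp.degree b := by
  classical
  simp only [Finsupp.degree_eq_weight_one, map_add]

lemma degree_single (i : Fin (n+1)) (k : ℕ) :
    Finsupp.degree (Finsupp.single i k) = k := by
  classical
  simp [Finsupp.degree_eq_weight_one, Finsupp.weight_apply, Finsupp.sum_single_index]

lemma degree_erase_add (σ : Fin (n+1) →₀ ℕ) (i : Fin (n+1)) :
    Finsupp.degree (σ.erase i) + σ i = Finsupp.degree σ := by
  classical
  conv_rhs => rw [← Finsupp.erase_add_single i σ]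
  rw [degree_add, degree_single]

lemma isHomog_pderiv {f : MvPolynomial (Fin (n+1)) ℝ} {k : ℕ} (i : Fin (n+1))
    (hf : f.IsHomogeneous k) : (pderiv (R := ℝ) i f).IsHomogeneous (k - 1) := by
  classical
  rw [f.as_sum, map_sum]
  refine IsHomogeneous.sum _ _ _ fun s hs => ?_
  rw [pderiv_monomial]
  rcases Nat.eq_zero_or_pos (s i) with h0 | hpos
  · simp [h0]; exact isHomogeneous_zero _ _ _
  · apply isHomogeneous_monomial
    have hd : Finsupp.degree s = k := by
      have := hf (MvPolynomial.mem_support_iff.mp hs)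
      rwa [Pi.one_def, ← Finsupp.degree_eq_weight_one] at this
    have hle : Finsupp.single i 1 ≤ s := by
      rw [Finsupp.single_le_iff]; exact hpos
    have : Finsupp.degree (s - Finsupp.single i 1) + 1 = k := by
      have := degree_add (s - Finsupp.single i 1) (Finsupp.single i 1)
      rw [tsub_add_cancel_of_le hle] at this
      rw [← hd, this, degree_single]
    omega

end Helpers
lemma pderiv_eq_zero_of_homog_zero {f : MvPolynomial (Fin (n+1)) ℝ}
    (hf : f.IsHomogeneous 0) (i : Fin (n+1)) : pderiv (R := ℝ) i f = 0 := by
  classical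
  rw [f.as_sum, map_sum]
  refine Finset.sum_eq_zero fun s hs => ?_
  have hd : Finsupp.degree s = 0 := by
    have := hf (MvPolynomial.mem_support_iff.mp hs)
    rwa [Pi.one_def, ← Finsupp.degree_eq_weight_one] at this
  have hs0 : s = 0 := (Finsupp.degree_eq_zero_iff s).mp hd
  subst hs0
  simp [pderiv_monomial]

lemma lapX_apply (f : MvPolynomial (Fin (n+1)) ℝ) :
    lapX n f = ∑ i : Fin n,
      pderiv (R := ℝ) i.castSucc (pderiv (R := ℝ) i.castSucc f) := by
  simp [lapX, LinearMap.sum_apply]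

lemma pderiv_lapX (i : Fin (n+1)) (f : MvPolynomial (Fin (n+1)) ℝ) :
    pderiv (R := ℝ) i (lapX n f) = lapX n (pderiv (R := ℝ) i f) := by
  rw [lapX_apply, lapX_apply, map_sum]
  refine Finset.sum_congr rfl fun j _ => ?_
  rw [my_pderiv_comm, my_pderiv_comm i]

lemma pderiv_lapX_pow (i : Fin (n+1)) (j : ℕ) (f : MvPolynomial (Fin (n+1)) ℝ) :
    pderiv (R := ℝ) i ((lapX n ^ j) f) = (lapX n ^ j) (pderiv (R := ℝ) i f) := by
  induction j generalizing f with
  | zero => simp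
  | succ j ih =>
      rw [pow_succ, Module.End.mul_apply, Module.End.mul_apply, ih, pderiv_lapX]

lemma isHomog_lapX {f : MvPolynomial (Fin (n+1)) ℝ} {k : ℕ}
    (hf : f.IsHomogeneous k) : (lapX n f).IsHomogeneous (k - 2) := by
  rw [lapX_apply]
  refine IsHomogeneous.sum _ _ _ fun i _ => ?_
  have := isHomog_pderiv i.castSucc (isHomog_pderiv i.castSucc hf)
  rwa [Nat.sub_sub] at this

lemma isHomog_lapX_pow {f : MvPolynomial (Fin (n+1)) ℝ} {k : ℕ}
    (hf : f.IsHomogeneous k) (j : ℕ) : ((lapX n ^ j) f).IsHomogeneous (k - 2 * j) := by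
  induction j generalizing k f with
  | zero => simpa using hf
  | succ j ih =>
      rw [pow_succ, Module.End.mul_apply]
      have := ih (isHomog_lapX hf)
      rwa [Nat.sub_sub, show 2 + 2 * j = 2 * (j+1) by ring] at this

lemma lapX_eq_zero_of_homog_le_one {f : MvPolynomial (Fin (n+1)) ℝ} {k : ℕ}
    (hf : f.IsHomogeneous k) (hk : k ≤ 1) : lapX n f = 0 := by
  rw [lapX_apply]
  refine Finset.sum_eq_zero fun i _ => ?_
  interval_cases k
  · rw [pderiv_eq_zero_of_homog_zero hf, map_zero]
  · have h0 : (pderiv (R := ℝ) i.castSucc f).IsHomogeneous 0 := by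
      simpa using isHomog_pderiv i.castSucc hf
    exact pderiv_eq_zero_of_homog_zero h0 _

lemma lapX_pow_eq_zero {f : MvPolynomial (Fin (n+1)) ℝ} {k : ℕ}
    (hf : f.IsHomogeneous k) {j : ℕ} (hj : k < 2 * j) : (lapX n ^ j) f = 0 := by
  induction j generalizing k f with
  | zero => omega
  | succ j ih =>
      rw [pow_succ, Module.End.mul_apply]
      rcases le_or_gt k 1 with hk | hk
      · rw [lapX_eq_zero_of_homog_le_one hf hk, map_zero]
      · exact ih (isHomog_lapX hf) (by omega)

lemma sum_range_ext {M : Type*} [AddCommMonoid M] (f : ℕ → M) {N N' B : ℕ}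
    (hB : ∀ j, B ≤ j → f j = 0) (h : B ≤ N) (h' : B ≤ N') :
    ∑ j ∈ Finset.range N, f j = ∑ j ∈ Finset.range N', f j := by
  have key : ∀ {N₁ : ℕ}, B ≤ N₁ → ∑ j ∈ Finset.range N₁, f j = ∑ j ∈ Finset.range B, f j := by
    intro N₁ hN₁
    refine (Finset.sum_subset (Finset.range_subset_range.mpr hN₁) ?_).symm
    intro j _ hj
    exact hB j (by simpa using hj)
  rw [key h, key h']
lemma castSucc_ne_last (i : Fin n) : (i.castSucc : Fin (n+1)) ≠ Fin.last n :=
  Fin.ne_of_lt (Fin.castSucc_lt_last i)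

lemma pderiv_horiz_ypow {i : Fin (n+1)} (hi : i ≠ Fin.last n) (k : ℕ) :
    pderiv (R := ℝ) i ((X (Fin.last n) : MvPolynomial (Fin (n+1)) ℝ) ^ k) = 0 := by
  rw [pderiv_pow, pderiv_X_of_ne (Ne.symm hi), mul_zero]

lemma pderiv_horiz_mul_ypow {i : Fin (n+1)} (hi : i ≠ Fin.last n)
    (P : MvPolynomial (Fin (n+1)) ℝ) (k : ℕ) :
    pderiv (R := ℝ) i (P * X (Fin.last n) ^ k) =
      pderiv (R := ℝ) i P * X (Fin.last n) ^ k := by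
  rw [pderiv_mul, pderiv_horiz_ypow hi, mul_zero, add_zero]

lemma pderiv_last_mul_ypow {P : MvPolynomial (Fin (n+1)) ℝ}
    (hP : pderiv (R := ℝ) (Fin.last n) P = 0) (k : ℕ) :
    pderiv (R := ℝ) (Fin.last n) (P * X (Fin.last n) ^ k) =
      ((k : ℝ)) • (P * X (Fin.last n) ^ (k - 1)) := by
  rw [pderiv_mul, hP, zero_mul, zero_add, pderiv_pow, pderiv_X_self, mul_one]
  rw [smul_eq_C_mul, C_eq_coe_nat]
  ring

lemma lapX_mul_ypow (P : MvPolynomial (Fin (n+1)) ℝ) (k : ℕ) :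
    lapX n (P * X (Fin.last n) ^ k) = lapX n P * X (Fin.last n) ^ k := by
  rw [lapX_apply, lapX_apply, Finset.sum_mul]
  refine Finset.sum_congr rfl fun i _ => ?_
  rw [pderiv_horiz_mul_ypow (castSucc_ne_last i), pderiv_horiz_mul_ypow (castSucc_ne_last i)]

lemma lapFull_apply (f : MvPolynomial (Fin (n+1)) ℝ) :
    lapFull n f = lapX n f +
      pderiv (R := ℝ) (Fin.last n) (pderiv (R := ℝ) (Fin.last n) f) := rfl

lemma lapFull_mul_ypow {P : MvPolynomial (Fin (n+1)) ℝ}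
    (hP : pderiv (R := ℝ) (Fin.last n) P = 0) (k : ℕ) :
    lapFull n (P * X (Fin.last n) ^ k) =
      lapX n P * X (Fin.last n) ^ k +
        ((k * (k - 1) : ℕ) : ℝ) • (P * X (Fin.last n) ^ (k - 2)) := by
  rw [lapFull_apply, lapX_mul_ypow, pderiv_last_mul_ypow hP, smul_eq_C_mul, pderiv_C_mul,
    pderiv_last_mul_ypow hP, smul_eq_C_mul, smul_eq_C_mul, show k - 1 - 1 = k - 2 from by omega,
    ← mul_assoc, ← map_mul]
  congr 3
  push_cast
  ring

lemma eval_snoc_mul_ypow (x : Fin n → ℝ) (P : MvPolynomial (Fin (n+1)) ℝ) {k : ℕ}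
    (hk : k ≠ 0) :
    eval (Fin.snoc x (0:ℝ)) (P * X (Fin.last n) ^ k) = 0 := by
  rw [map_mul, map_pow, eval_X, Fin.snoc_last, zero_pow hk, mul_zero]
lemma sum_eq_degree (σ : Fin (n+1) →₀ ℕ) : (σ.sum fun _ e => e) = Finsupp.degree σ := rfl

/-- coefficient in `deltaDInv` -/
def dcoef (n : ℕ) (σ : Fin (n+1) →₀ ℕ) (j : ℕ) : ℝ :=
  (-1 : ℝ) ^ j * ((σ (Fin.last n)).factorial : ℝ) /
    (((σ (Fin.last n) + 2 * j + 2).factorial : ℝ))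

/-- monomial part in `deltaDInv` -/
def dmono (n : ℕ) (σ : Fin (n+1) →₀ ℕ) (j : ℕ) : MvPolynomial (Fin (n+1)) ℝ :=
  ((lapX n) ^ j) (monomial (σ.erase (Fin.last n)) (1 : ℝ)) *
    (X (Fin.last n)) ^ (σ (Fin.last n) + 2 * j + 2)

/-- value of `deltaDInv` on the monomial `monomial σ 1`. -/
def Gfun (n : ℕ) (σ : Fin (n+1) →₀ ℕ) : MvPolynomial (Fin (n+1)) ℝ :=
  ∑ j ∈ Finset.range (Finsupp.degree σ + 1), dcoef n σ j • dmono n σ j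

lemma deltaDInv_eq (p : MvPolynomial (Fin (n+1)) ℝ) :
    deltaDInv n p = ∑ σ ∈ p.support, coeff σ p • Gfun n σ := by
  unfold deltaDInv Gfun dcoef dmono
  refine Finset.sum_congr rfl fun σ _ => ?_
  rw [Finset.smul_sum, sum_eq_degree]
  refine Finset.sum_congr rfl fun j _ => ?_
  rw [smul_smul]

lemma deltaDInv_eq' (p : MvPolynomial (Fin (n+1)) ℝ) :
    deltaDInv n p = (AddMonoidAlgebra.coeff p).sum (fun σ c => c • Gfun n σ) := by
  rw [deltaDInv_eq]; rfl

lemma deltaDInv_add (p q : MvPolynomial (Fin (n+1)) ℝ) :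
    deltaDInv n (p + q) = deltaDInv n p + deltaDInv n q := by
  classical
  rw [deltaDInv_eq', deltaDInv_eq', deltaDInv_eq']
  exact Finsupp.sum_add_index' (fun σ => zero_smul ℝ _) (fun σ b₁ b₂ => add_smul _ _ _)

lemma deltaDInv_zero : deltaDInv n 0 = 0 := by
  simp [deltaDInv]

lemma deltaDInv_sum {α : Type*} (s : Finset α) (f : α → MvPolynomial (Fin (n+1)) ℝ) :
    deltaDInv n (∑ a ∈ s, f a) = ∑ a ∈ s, deltaDInv n (f a) := by
  classical
  induction s using Finset.induction_on with
  | empty => simp [deltaDInv_zero]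
  | insert _ _ h ih =>
      rw [Finset.sum_insert h, Finset.sum_insert h, deltaDInv_add, ih]

lemma deltaDInv_monomial (σ : Fin (n+1) →₀ ℕ) (c : ℝ) :
    deltaDInv n (monomial σ c) = c • Gfun n σ := by
  rw [deltaDInv_eq']
  exact sum_monomial_eq (by rw [zero_smul])
lemma fact_cast_ne_zero (a : ℕ) : ((a.factorial : ℝ)) ≠ 0 := by
  exact_mod_cast Nat.factorial_ne_zero a

lemma fact_step2 (a : ℕ) :
    (((a + 2).factorial : ℝ)) = ((a : ℝ) + 2) * ((a : ℝ) + 1) * (a.factorial : ℝ) := by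
  rw [show a + 2 = (a + 1) + 1 by ring, Nat.factorial_succ, Nat.factorial_succ]
  push_cast
  ring

lemma monomial_erase_mul (σ : Fin (n+1) →₀ ℕ) :
    (monomial (σ.erase (Fin.last n)) (1:ℝ) : MvPolynomial (Fin (n+1)) ℝ) *
      X (Fin.last n) ^ (σ (Fin.last n)) = monomial σ 1 := by
  rw [X_pow_eq_monomial, monomial_mul, one_mul, Finsupp.erase_add_single]

lemma pderiv_last_monomial_erase (σ : Fin (n+1) →₀ ℕ) :
    pderiv (R := ℝ) (Fin.last n) (monomial (σ.erase (Fin.last n)) (1:ℝ)) = 0 := by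
  rw [pderiv_monomial, Finsupp.erase_same, Nat.cast_zero, mul_zero, monomial_zero]

lemma pderiv_last_P (σ : Fin (n+1) →₀ ℕ) (j : ℕ) :
    pderiv (R := ℝ) (Fin.last n)
      ((lapX n ^ j) (monomial (σ.erase (Fin.last n)) (1:ℝ))) = 0 := by
  rw [pderiv_lapX_pow, pderiv_last_monomial_erase, map_zero]

lemma isHomog_P (σ : Fin (n+1) →₀ ℕ) (j : ℕ) :
    ((lapX n ^ j) (monomial (σ.erase (Fin.last n)) (1:ℝ))).IsHomogeneous
      (Finsupp.degree (σ.erase (Fin.last n)) - 2 * j) :=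
  isHomog_lapX_pow (isHomogeneous_monomial _ rfl) j

lemma P_eq_zero (σ : Fin (n+1) →₀ ℕ) {j : ℕ}
    (hj : Finsupp.degree (σ.erase (Fin.last n)) < 2 * j) :
    ((lapX n ^ j) (monomial (σ.erase (Fin.last n)) (1:ℝ))) = 0 :=
  lapX_pow_eq_zero (isHomogeneous_monomial _ rfl) hj

lemma lapFull_Gfun (σ : Fin (n+1) →₀ ℕ) :
    lapFull n (Gfun n σ) = monomial σ 1 := by
  classical
  set l := σ (Fin.last n) with hl
  set T := Finsupp.degree σ with hT
  have hdeg' : Finsupp.degree (σ.erase (Fin.last n)) + l = T := degree_erase_add σ _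
  have hpow : ∀ j : ℕ, lapX n ((lapX n ^ j) (monomial (σ.erase (Fin.last n)) (1:ℝ))) =
      (lapX n ^ (j+1)) (monomial (σ.erase (Fin.last n)) (1:ℝ)) := by
    intro j
    rw [← Module.End.mul_apply, ← pow_succ']
  have hterm : ∀ j,
      lapFull n (dcoef n σ j • dmono n σ j) =
        dcoef n σ j • ((lapX n ^ (j+1)) (monomial (σ.erase (Fin.last n)) (1:ℝ)) *
            X (Fin.last n) ^ (l + 2*j + 2)) +
          (dcoef n σ j * ((l + 2*j + 2 : ℕ) : ℝ) * ((l + 2*j + 1 : ℕ) : ℝ)) •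
            ((lapX n ^ j) (monomial (σ.erase (Fin.last n)) (1:ℝ)) *
              X (Fin.last n) ^ (l + 2*j)) := by
    intro j
    rw [map_smul, dmono, lapFull_mul_ypow (pderiv_last_P σ j), smul_add, smul_smul,
      show (l + 2*j + 2) - 2 = l + 2*j from by omega,
      show (l + 2*j + 2) - 1 = l + 2*j + 1 from by omega,
      hpow j, ← hl]
    congr 2
    push_cast
    ring
  rw [Gfun, map_sum]
  rw [Finset.sum_congr rfl (fun j _ => hterm j), Finset.sum_add_distrib]
  have hB : ∑ j ∈ Finset.range (T + 1),
      (dcoef n σ j * ((l + 2*j + 2 : ℕ) : ℝ) * ((l + 2*j + 1 : ℕ) : ℝ)) •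
        ((lapX n ^ j) (monomial (σ.erase (Fin.last n)) (1:ℝ)) * X (Fin.last n) ^ (l + 2*j)) =
      (∑ j ∈ Finset.range T,
        (-(dcoef n σ j)) • ((lapX n ^ (j+1)) (monomial (σ.erase (Fin.last n)) (1:ℝ)) *
          X (Fin.last n) ^ (l + 2*j + 2))) + monomial σ 1 := by
    rw [Finset.sum_range_succ']
    congr 1
    · refine Finset.sum_congr rfl fun j _ => ?_
      rw [show l + 2*(j+1) = l + 2*j + 2 from by ring]
      congr 1
      rw [dcoef, dcoef, ← hl,
        show l + 2*(j+1) + 2 = (l + 2*j + 2) + 2 from by ring,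
        fact_step2 (l + 2*j + 2)]
      push_cast
      have hne : ((l + 2*j + 2).factorial : ℝ) ≠ 0 := fact_cast_ne_zero _
      field_simp
      ring
    · have hco : dcoef n σ 0 * ((l + 2*0 + 2 : ℕ) : ℝ) * ((l + 2*0 + 1 : ℕ) : ℝ) = 1 := by
        rw [dcoef, ← hl, show l + 2*0 + 2 = l + 2 from by ring, fact_step2 l]
        push_cast
        have hne : (l.factorial : ℝ) ≠ 0 := fact_cast_ne_zero _
        field_simp
        try ring
      rw [hco, one_smul]
      simp only [pow_zero, Module.End.one_apply]
      rw [show l + 2*0 = l from by ring, monomial_erase_mul]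
  rw [hB]
  have hA : ∑ j ∈ Finset.range (T + 1),
      dcoef n σ j • ((lapX n ^ (j+1)) (monomial (σ.erase (Fin.last n)) (1:ℝ)) *
        X (Fin.last n) ^ (l + 2*j + 2)) =
      ∑ j ∈ Finset.range T,
        dcoef n σ j • ((lapX n ^ (j+1)) (monomial (σ.erase (Fin.last n)) (1:ℝ)) *
          X (Fin.last n) ^ (l + 2*j + 2)) := by
    rw [Finset.sum_range_succ]
    have hz : ((lapX n ^ (T+1)) (monomial (σ.erase (Fin.last n)) (1:ℝ))) = 0 :=
      P_eq_zero σ (by omega)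
    rw [hz, zero_mul, smul_zero, add_zero]
  rw [hA, ← add_assoc, ← Finset.sum_add_distrib]
  have hz : ∀ j ∈ Finset.range T,
      dcoef n σ j • ((lapX n ^ (j+1)) (monomial (σ.erase (Fin.last n)) (1:ℝ)) *
          X (Fin.last n) ^ (l + 2*j + 2)) +
        (-(dcoef n σ j)) • ((lapX n ^ (j+1)) (monomial (σ.erase (Fin.last n)) (1:ℝ)) *
          X (Fin.last n) ^ (l + 2*j + 2)) = 0 := by
    intro j _
    rw [neg_smul, add_neg_cancel]
  rw [Finset.sum_congr rfl hz, Finset.sum_const_zero, zero_add]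

lemma lapFull_deltaDInv (q : MvPolynomial (Fin (n+1)) ℝ) :
    lapFull n (deltaDInv n q) = q := by
  classical
  have : lapFull n (deltaDInv n q) = ∑ σ ∈ q.support, monomial σ (coeff σ q) := by
    conv_lhs => rw [q.as_sum]
    rw [deltaDInv_sum, map_sum]
    refine Finset.sum_congr rfl fun σ _ => ?_
    rw [deltaDInv_monomial, map_smul, lapFull_Gfun, smul_monomial, smul_eq_mul, mul_one]
  rw [this, ← q.as_sum]
lemma isHomog_smul (c : ℝ) {f : MvPolynomial (Fin (n+1)) ℝ} {k : ℕ}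
    (hf : f.IsHomogeneous k) : (c • f).IsHomogeneous k := by
  rw [smul_eq_C_mul]
  simpa using (isHomogeneous_C _ c).mul hf

lemma eval_smul_real (v : Fin (n+1) → ℝ) (c : ℝ) (f : MvPolynomial (Fin (n+1)) ℝ) :
    eval v (c • f) = c * eval v f := by
  rw [smul_eq_C_mul, map_mul, eval_C]

lemma isHomog_Gfun (σ : Fin (n+1) →₀ ℕ) :
    (Gfun n σ).IsHomogeneous (Finsupp.degree σ + 2) := by
  have hdeg' := degree_erase_add σ (Fin.last n)
  rw [Gfun]
  refine IsHomogeneous.sum _ _ _ fun j _ => ?_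
  refine isHomog_smul _ ?_
  rcases le_or_gt (2 * j) (Finsupp.degree (σ.erase (Fin.last n))) with hle | hgt
  · rw [dmono]
    have h1 := isHomog_P σ j
    have h2 : ((X (Fin.last n) : MvPolynomial (Fin (n+1)) ℝ) ^
        (σ (Fin.last n) + 2 * j + 2)).IsHomogeneous (σ (Fin.last n) + 2 * j + 2) := by
      simpa using (isHomogeneous_X ℝ (Fin.last n)).pow (σ (Fin.last n) + 2 * j + 2)
    have := h1.mul h2
    have harith : (Finsupp.degree (σ.erase (Fin.last n)) - 2 * j) +
        (σ (Fin.last n) + 2 * j + 2) = Finsupp.degree σ + 2 := by omega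
    rwa [harith] at this
  · rw [dmono, P_eq_zero σ hgt, zero_mul]
    exact isHomogeneous_zero _ _ _

lemma isHomog_deltaDInv {q : MvPolynomial (Fin (n+1)) ℝ} {k : ℕ}
    (hq : q.IsHomogeneous k) : (deltaDInv n q).IsHomogeneous (k + 2) := by
  classical
  rw [q.as_sum, deltaDInv_sum]
  refine IsHomogeneous.sum _ _ _ fun σ hσ => ?_
  rw [deltaDInv_monomial]
  refine isHomog_smul _ ?_
  have : Finsupp.degree σ = k := by
    have := hq (MvPolynomial.mem_support_iff.mp hσ)
    rwa [Pi.one_def, ← Finsupp.degree_eq_weight_one] at this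
  rw [← this]
  exact isHomog_Gfun σ

lemma eval0_Gfun (x : Fin n → ℝ) (σ : Fin (n+1) →₀ ℕ) :
    eval (Fin.snoc x (0:ℝ)) (Gfun n σ) = 0 := by
  rw [Gfun, map_sum]
  refine Finset.sum_eq_zero fun j _ => ?_
  rw [eval_smul_real, dmono, eval_snoc_mul_ypow x _ (by omega), mul_zero]

lemma eval0_deltaDInv (x : Fin n → ℝ) (q : MvPolynomial (Fin (n+1)) ℝ) :
    eval (Fin.snoc x (0:ℝ)) (deltaDInv n q) = 0 := by
  classical
  rw [q.as_sum, deltaDInv_sum, map_sum]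
  refine Finset.sum_eq_zero fun σ _ => ?_
  rw [deltaDInv_monomial, eval_smul_real, eval0_Gfun, mul_zero]
lemma setY0_monomial (σ : Fin (n+1) →₀ ℕ) (c : ℝ) :
    setY0 n (monomial σ c) =
      if σ (Fin.last n) = 0 then monomial σ c else 0 := by
  classical
  rw [setY0, aeval_monomial]
  by_cases h : σ (Fin.last n) = 0
  · rw [if_pos h]
    have hprod : (σ.prod fun i k =>
        (if i = Fin.last n then 0 else X i : MvPolynomial (Fin (n+1)) ℝ) ^ k) =
        σ.prod fun i k => (X i : MvPolynomial (Fin (n+1)) ℝ) ^ k := by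
      refine Finsupp.prod_congr fun i hi => ?_
      have hine : i ≠ Fin.last n := by
        intro heq
        exact (Finsupp.mem_support_iff.mp hi) (heq ▸ h)
      rw [if_neg hine]
    rw [algebraMap_eq, hprod, ← monomial_eq]
  · rw [if_neg h]
    have hmem : Fin.last n ∈ σ.support := Finsupp.mem_support_iff.mpr h
    have : (σ.prod fun i k =>
        (if i = Fin.last n then 0 else X i : MvPolynomial (Fin (n+1)) ℝ) ^ k) = 0 := by
      refine Finset.prod_eq_zero hmem ?_
      simp [h]
    rw [Finsupp.prod] at this ⊢
    rw [this, mul_zero]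

lemma setY0_coeff_eq_zero (f : MvPolynomial (Fin (n+1)) ℝ) (τ : Fin (n+1) →₀ ℕ)
    (hτ : τ (Fin.last n) ≠ 0) : coeff τ (setY0 n f) = 0 := by
  classical
  conv_lhs => rw [f.as_sum]
  rw [map_sum, coeff_sum]
  refine Finset.sum_eq_zero fun σ _ => ?_
  rw [setY0_monomial]
  by_cases h : σ (Fin.last n) = 0
  · rw [if_pos h, coeff_monomial]
    have : σ ≠ τ := fun heq => hτ (by rw [← heq]; exact h)
    rw [if_neg this]
  · rw [if_neg h, coeff_zero]

lemma setY0_support_last (f : MvPolynomial (Fin (n+1)) ℝ) :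
    ∀ τ ∈ (setY0 n f).support, τ (Fin.last n) = 0 := by
  intro τ hτ
  by_contra hne
  exact (MvPolynomial.mem_support_iff.mp hτ) (setY0_coeff_eq_zero f τ hne)

lemma pderiv_last_of_noY {f : MvPolynomial (Fin (n+1)) ℝ}
    (h : ∀ τ ∈ f.support, τ (Fin.last n) = 0) :
    pderiv (R := ℝ) (Fin.last n) f = 0 := by
  classical
  conv_lhs => rw [f.as_sum]
  rw [map_sum]
  refine Finset.sum_eq_zero fun σ hσ => ?_
  rw [pderiv_monomial, h σ hσ, Nat.cast_zero, mul_zero, monomial_zero]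

lemma pderiv_last_setY0 (f : MvPolynomial (Fin (n+1)) ℝ) :
    pderiv (R := ℝ) (Fin.last n) (setY0 n f) = 0 :=
  pderiv_last_of_noY (setY0_support_last f)

lemma setY0_isHomog {f : MvPolynomial (Fin (n+1)) ℝ} {k : ℕ}
    (hf : f.IsHomogeneous k) : (setY0 n f).IsHomogeneous k := by
  classical
  conv_lhs => rw [f.as_sum]
  rw [map_sum]
  refine IsHomogeneous.sum _ _ _ fun σ hσ => ?_
  rw [setY0_monomial]
  by_cases h : σ (Fin.last n) = 0
  · rw [if_pos h]
    refine isHomogeneous_monomial _ ?_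
    have := hf (MvPolynomial.mem_support_iff.mp hσ)
    rwa [Pi.one_def, ← Finsupp.degree_eq_weight_one] at this
  · rw [if_neg h]
    exact isHomogeneous_zero _ _ _

lemma pderiv0_intX0 (g : MvPolynomial (Fin (n+1)) ℝ) :
    pderiv (R := ℝ) (0 : Fin (n+1)) (intX0 n g) = g := by
  classical
  rw [intX0, map_sum]
  have hterm : ∀ σ ∈ g.support,
      pderiv (R := ℝ) (0 : Fin (n+1))
        ((coeff σ g / ((σ 0 : ℝ) + 1)) • monomial (σ + Finsupp.single 0 1) (1 : ℝ)) =
      monomial σ (coeff σ g) := by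
    intro σ _
    rw [smul_eq_C_mul, pderiv_C_mul, pderiv_monomial]
    have h1 : σ + Finsupp.single (0 : Fin (n+1)) (1 : ℕ) - Finsupp.single (0 : Fin (n+1)) (1 : ℕ) = σ :=
      add_tsub_cancel_right _ _
    have h2 : (σ + Finsupp.single (0 : Fin (n+1)) (1 : ℕ)) (0 : Fin (n+1)) = σ 0 + 1 := by
      rw [Finsupp.add_apply, Finsupp.single_eq_same]
    rw [h1, h2, one_mul, ← smul_eq_C_mul, smul_monomial, smul_eq_mul, Nat.cast_add,
      Nat.cast_one, div_mul_cancel₀]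
    positivity
  rw [Finset.sum_congr rfl hterm]
  exact support_sum_monomial_coeff g

lemma pderiv_last_intX0 (h0 : (0 : Fin (n+1)) ≠ Fin.last n)
    {g : MvPolynomial (Fin (n+1)) ℝ} (hg : ∀ σ ∈ g.support, σ (Fin.last n) = 0) :
    pderiv (R := ℝ) (Fin.last n) (intX0 n g) = 0 := by
  classical
  rw [intX0, map_sum]
  refine Finset.sum_eq_zero fun σ hσ => ?_
  rw [smul_eq_C_mul, pderiv_C_mul, pderiv_monomial]
  have : (σ + Finsupp.single (0 : Fin (n+1)) (1 : ℕ)) (Fin.last n) = 0 := by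
    rw [Finsupp.add_apply, Finsupp.single_eq_of_ne' h0, hg σ hσ]
    rfl
  rw [this, Nat.cast_zero, mul_zero, monomial_zero, mul_zero]

lemma intX0_isHomog {g : MvPolynomial (Fin (n+1)) ℝ} {k : ℕ}
    (hg : g.IsHomogeneous k) : (intX0 n g).IsHomogeneous (k + 1) := by
  classical
  rw [intX0]
  refine IsHomogeneous.sum _ _ _ fun σ hσ => ?_
  refine isHomog_smul _ ?_
  refine isHomogeneous_monomial _ ?_
  rw [degree_add, degree_single]
  have := hg (MvPolynomial.mem_support_iff.mp hσ)
  rw [Pi.one_def, ← Finsupp.degree_eq_weight_one] at this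
  rw [this]
section CV
variable {m : ℕ} {p : MvPolynomial (Fin (n+1)) ℝ}

lemma cpoly_isHomog (hm : 2 ≤ m) (hp : p.IsHomogeneous (m-1)) :
    (cpoly n p).IsHomogeneous (m-1) := by
  rw [cpoly]
  refine IsHomogeneous.neg ?_
  have h1 : (pderiv (R := ℝ) (Fin.last n) p).IsHomogeneous (m-1-1) := isHomog_pderiv _ hp
  have h2 := intX0_isHomog (setY0_isHomog h1)
  rwa [show m - 1 - 1 + 1 = m - 1 from by omega] at h2

lemma pderiv_last_cpoly (h0 : (0 : Fin (n+1)) ≠ Fin.last n) :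
    pderiv (R := ℝ) (Fin.last n) (cpoly n p) = 0 := by
  rw [cpoly, map_neg, pderiv_last_intX0 h0 (setY0_support_last _), neg_zero]

lemma pderiv0_cpoly :
    pderiv (R := ℝ) (0 : Fin (n+1)) (cpoly n p) =
      - setY0 n (pderiv (R := ℝ) (Fin.last n) p) := by
  rw [cpoly, map_neg, pderiv0_intX0]

lemma pderiv_last_Q (h0 : (0 : Fin (n+1)) ≠ Fin.last n) (j : ℕ) :
    pderiv (R := ℝ) (Fin.last n) ((lapX n ^ j) (cpoly n p)) = 0 := by
  rw [pderiv_lapX_pow, pderiv_last_cpoly h0, map_zero]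

lemma isHomog_V1 (hm : 2 ≤ m) (hp : p.IsHomogeneous (m-1)) :
    (V1 n m p).IsHomogeneous m := by
  rw [V1]
  refine IsHomogeneous.sum _ _ _ fun j _ => ?_
  refine isHomog_smul _ ?_
  rcases le_or_gt (2 * j) (m - 1) with hle | hgt
  · have h1 := isHomog_lapX_pow (cpoly_isHomog hm hp) j
    have h2 : ((X (Fin.last n) : MvPolynomial (Fin (n+1)) ℝ) ^ (2*j+1)).IsHomogeneous
        (2*j+1) := by
      simpa using (isHomogeneous_X ℝ (Fin.last n)).pow (2*j+1)
    have := h1.mul h2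
    rwa [show m - 1 - 2*j + (2*j+1) = m from by omega] at this
  · rw [lapX_pow_eq_zero (cpoly_isHomog hm hp) hgt, zero_mul]
    exact isHomogeneous_zero _ _ _

lemma eval0_V1 (x : Fin n → ℝ) : eval (Fin.snoc x (0:ℝ)) (V1 n m p) = 0 := by
  rw [V1, map_sum]
  refine Finset.sum_eq_zero fun j _ => ?_
  rw [eval_smul_real, eval_snoc_mul_ypow x _ (by omega), mul_zero]

lemma lapFull_V1 (h0 : (0 : Fin (n+1)) ≠ Fin.last n) (hm : 2 ≤ m)
    (hp : p.IsHomogeneous (m-1)) : lapFull n (V1 n m p) = 0 := by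
  have hc := cpoly_isHomog (n := n) hm hp
  have hpow : ∀ j : ℕ, lapX n ((lapX n ^ j) (cpoly n p)) =
      (lapX n ^ (j+1)) (cpoly n p) := by
    intro j
    rw [← Module.End.mul_apply, ← pow_succ']
  have hterm : ∀ j,
      lapFull n (((-1:ℝ)^j / ((2*j+1).factorial : ℝ)) •
          ((lapX n ^ j) (cpoly n p) * X (Fin.last n) ^ (2*j+1))) =
        ((-1:ℝ)^j / ((2*j+1).factorial : ℝ)) •
            ((lapX n ^ (j+1)) (cpoly n p) * X (Fin.last n) ^ (2*j+1)) +
          (((-1:ℝ)^j / ((2*j+1).factorial : ℝ)) * (((2*j+1) * (2*j) : ℕ) : ℝ)) •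
            ((lapX n ^ j) (cpoly n p) * X (Fin.last n) ^ (2*j - 1)) := by
    intro j
    rw [map_smul, lapFull_mul_ypow (pderiv_last_Q h0 j), smul_add, smul_smul,
      show (2*j+1) - 2 = 2*j - 1 from by omega,
      show (2*j+1) - 1 = 2*j from by omega, hpow j]
  rw [V1, map_sum, Finset.sum_congr rfl (fun j _ => hterm j), Finset.sum_add_distrib]
  have hB : ∑ j ∈ Finset.range (m + 1),
      (((-1:ℝ)^j / ((2*j+1).factorial : ℝ)) * (((2*j+1) * (2*j) : ℕ) : ℝ)) •
        ((lapX n ^ j) (cpoly n p) * X (Fin.last n) ^ (2*j - 1)) =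
      ∑ j ∈ Finset.range m,
        (-((-1:ℝ)^j / ((2*j+1).factorial : ℝ))) •
          ((lapX n ^ (j+1)) (cpoly n p) * X (Fin.last n) ^ (2*j+1)) := by
    rw [Finset.sum_range_succ']
    have hzero : (((-1:ℝ)^0 / ((2*0+1).factorial : ℝ)) * (((2*0+1) * (2*0) : ℕ) : ℝ)) •
        ((lapX n ^ 0) (cpoly n p) * X (Fin.last n) ^ (2*0 - 1)) = 0 := by
      norm_num
    rw [hzero, add_zero]
    refine Finset.sum_congr rfl fun j _ => ?_
    rw [show 2*(j+1) - 1 = 2*j+1 from by omega]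
    congr 1
    rw [show 2*(j+1)+1 = (2*j+1) + 2 from by ring, fact_step2 (2*j+1)]
    push_cast
    have hne : ((2*j+1).factorial : ℝ) ≠ 0 := fact_cast_ne_zero _
    field_simp
    ring
  rw [hB]
  have hA : ∑ j ∈ Finset.range (m + 1),
      ((-1:ℝ)^j / ((2*j+1).factorial : ℝ)) •
        ((lapX n ^ (j+1)) (cpoly n p) * X (Fin.last n) ^ (2*j+1)) =
      ∑ j ∈ Finset.range m,
        ((-1:ℝ)^j / ((2*j+1).factorial : ℝ)) •
          ((lapX n ^ (j+1)) (cpoly n p) * X (Fin.last n) ^ (2*j+1)) := by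
    rw [Finset.sum_range_succ]
    have hz : (lapX n ^ (m+1)) (cpoly n p) = 0 :=
      lapX_pow_eq_zero hc (by omega)
    rw [hz, zero_mul, smul_zero, add_zero]
  rw [hA, ← Finset.sum_add_distrib]
  refine Finset.sum_eq_zero fun j _ => ?_
  rw [neg_smul, add_neg_cancel]

lemma pderiv0_V1 (h0 : (0 : Fin (n+1)) ≠ Fin.last n) :
    pderiv (R := ℝ) (0 : Fin (n+1)) (V1 n m p) =
      - ∑ j ∈ Finset.range (m + 1),
        ((-1:ℝ)^j / ((2*j+1).factorial : ℝ)) •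
          ((lapX n ^ j) (setY0 n (pderiv (R := ℝ) (Fin.last n) p)) *
            X (Fin.last n) ^ (2*j+1)) := by
  rw [V1, map_sum, ← Finset.sum_neg_distrib]
  refine Finset.sum_congr rfl fun j _ => ?_
  rw [smul_eq_C_mul, pderiv_C_mul, pderiv_horiz_mul_ypow h0, pderiv_lapX_pow,
    pderiv0_cpoly, map_neg, neg_mul, ← smul_eq_C_mul, smul_neg]

end CV
lemma erase_sub_single (σ : Fin (n+1) →₀ ℕ) {i : Fin (n+1)} (hi : i ≠ Fin.last n) :
    (σ - Finsupp.single i 1).erase (Fin.last n) =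
      σ.erase (Fin.last n) - Finsupp.single i 1 := by
  ext a
  rcases eq_or_ne a (Fin.last n) with rfl | ha
  · rw [Finsupp.erase_same, Finsupp.tsub_apply, Finsupp.erase_same,
      Finsupp.single_eq_of_ne' hi]
    omega
  · rw [Finsupp.erase_ne ha, Finsupp.tsub_apply, Finsupp.tsub_apply, Finsupp.erase_ne ha]

lemma sub_single_last_apply (σ : Fin (n+1) →₀ ℕ) {i : Fin (n+1)} (hi : i ≠ Fin.last n) :
    (σ - Finsupp.single i (1:ℕ) : Fin (n+1) →₀ ℕ) (Fin.last n) = σ (Fin.last n) := by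
  rw [Finsupp.tsub_apply, Finsupp.single_eq_of_ne' hi, Nat.sub_zero]

lemma degree_le_of_le {a b : Fin (n+1) →₀ ℕ} (h : a ≤ b) :
    Finsupp.degree a ≤ Finsupp.degree b := by
  have hb : b - a + a = b := tsub_add_cancel_of_le h
  have := degree_add (b - a) a
  rw [hb] at this
  omega

lemma degree_sub_single (τ : Fin (n+1) →₀ ℕ) (i : Fin (n+1)) (h : 1 ≤ τ i) :
    Finsupp.degree (τ - Finsupp.single i 1) + 1 = Finsupp.degree τ := by
  have hle : Finsupp.single i 1 ≤ τ := by rw [Finsupp.single_le_iff]; exact h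
  conv_rhs => rw [← tsub_add_cancel_of_le hle]
  rw [degree_add, degree_single]

lemma erase_apply_of_ne (σ : Fin (n+1) →₀ ℕ) {i : Fin (n+1)} (hi : i ≠ Fin.last n) :
    (σ.erase (Fin.last n)) i = σ i := Finsupp.erase_ne hi

lemma pderiv_horiz_Gfun {i : Fin (n+1)} (hi : i ≠ Fin.last n) (σ : Fin (n+1) →₀ ℕ) :
    pderiv (R := ℝ) i (Gfun n σ) = ((σ i : ℝ)) • Gfun n (σ - Finsupp.single i 1) := by
  classical
  have hterm : ∀ j, pderiv (R := ℝ) i (dcoef n σ j • dmono n σ j) =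
      ((σ i : ℝ)) • (dcoef n σ j •
        ((lapX n ^ j) (monomial (σ.erase (Fin.last n) - Finsupp.single i 1) (1:ℝ)) *
          X (Fin.last n) ^ (σ (Fin.last n) + 2*j + 2))) := by
    intro j
    rw [smul_eq_C_mul, pderiv_C_mul, dmono, pderiv_horiz_mul_ypow hi, pderiv_lapX_pow,
      pderiv_monomial, one_mul, erase_apply_of_ne σ hi,
      show (monomial (σ.erase (Fin.last n) - Finsupp.single i 1) ((σ i : ℝ)) :
          MvPolynomial (Fin (n+1)) ℝ) =
        (σ i : ℝ) • monomial (σ.erase (Fin.last n) - Finsupp.single i 1) (1:ℝ) from by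
          rw [smul_monomial, smul_eq_mul, mul_one],
      map_smul, smul_mul_assoc, ← smul_eq_C_mul, smul_comm]
  rw [Gfun, map_sum, Finset.sum_congr rfl (fun j _ => hterm j), ← Finset.smul_sum]
  rcases Nat.eq_zero_or_pos (σ i) with h0 | hpos
  · rw [h0, Nat.cast_zero, zero_smul, zero_smul]
  · congr 1
    rw [Gfun]
    have hT : Finsupp.degree (σ - Finsupp.single i 1) + 1 = Finsupp.degree σ :=
      degree_sub_single σ i hpos
    have hco : ∀ j, dcoef n (σ - Finsupp.single i 1) j = dcoef n σ j := by
      intro j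
      rw [dcoef, dcoef, sub_single_last_apply σ hi]
    have hmo : ∀ j, dmono n (σ - Finsupp.single i 1) j =
        (lapX n ^ j) (monomial (σ.erase (Fin.last n) - Finsupp.single i 1) (1:ℝ)) *
          X (Fin.last n) ^ (σ (Fin.last n) + 2*j + 2) := by
      intro j
      rw [dmono, erase_sub_single σ hi, sub_single_last_apply σ hi]
    have hsum : ∑ j ∈ Finset.range (Finsupp.degree (σ - Finsupp.single i 1) + 1),
        dcoef n (σ - Finsupp.single i 1) j • dmono n (σ - Finsupp.single i 1) j =
        ∑ j ∈ Finset.range (Finsupp.degree (σ - Finsupp.single i 1) + 1),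
          dcoef n σ j •
            ((lapX n ^ j) (monomial (σ.erase (Fin.last n) - Finsupp.single i 1) (1:ℝ)) *
              X (Fin.last n) ^ (σ (Fin.last n) + 2*j + 2)) :=
      Finset.sum_congr rfl fun j _ => by rw [hco j, hmo j]
    rw [hsum]
    have hvanish : ∀ j, Finsupp.degree σ ≤ j →
        dcoef n σ j •
          ((lapX n ^ j) (monomial (σ.erase (Fin.last n) - Finsupp.single i 1) (1:ℝ)) *
            X (Fin.last n) ^ (σ (Fin.last n) + 2*j + 2)) = 0 := by
      intro j hj
      have hz : (lapX n ^ j) (monomial (σ.erase (Fin.last n) - Finsupp.single i 1) (1:ℝ)) = 0 := by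
        refine lapX_pow_eq_zero (isHomogeneous_monomial _ rfl) ?_
        have h2 : Finsupp.degree (σ.erase (Fin.last n) - Finsupp.single i 1) ≤
            Finsupp.degree (σ.erase (Fin.last n)) := degree_le_of_le tsub_le_self
        have h4 := degree_erase_add σ (Fin.last n)
        have hj1 : 1 ≤ Finsupp.degree σ := le_trans hpos (Finsupp.le_degree i σ)
        omega
      rw [hz, zero_mul, smul_zero]
    exact (sum_range_ext _ hvanish (by omega) (by omega)).symm

lemma pderiv_horiz_deltaDInv {i : Fin (n+1)} (hi : i ≠ Fin.last n)
    (q : MvPolynomial (Fin (n+1)) ℝ) :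
    pderiv (R := ℝ) i (deltaDInv n q) = deltaDInv n (pderiv (R := ℝ) i q) := by
  classical
  conv_lhs => rw [q.as_sum]
  conv_rhs => rw [q.as_sum]
  rw [deltaDInv_sum, map_sum, map_sum, deltaDInv_sum]
  refine Finset.sum_congr rfl fun σ _ => ?_
  rw [deltaDInv_monomial, pderiv_monomial, deltaDInv_monomial, smul_eq_C_mul, pderiv_C_mul,
    pderiv_horiz_Gfun hi, ← smul_eq_C_mul, smul_smul]
/-- truncated harmonic-extension-type sum -/
def myE1 (n N : ℕ) (g : MvPolynomial (Fin (n+1)) ℝ) : MvPolynomial (Fin (n+1)) ℝ :=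
  ∑ j ∈ Finset.range (N+1), ((-1:ℝ)^j / ((2*j+1).factorial : ℝ)) •
    ((lapX n ^ j) g * X (Fin.last n) ^ (2*j+1))

lemma myE1_zero (N : ℕ) : myE1 n N 0 = 0 := by
  simp [myE1]

lemma myE1_sum {α : Type*} (N : ℕ) (s : Finset α) (f : α → MvPolynomial (Fin (n+1)) ℝ) :
    myE1 n N (∑ a ∈ s, f a) = ∑ a ∈ s, myE1 n N (f a) := by
  simp only [myE1, map_sum, Finset.sum_mul, Finset.smul_sum]
  exact Finset.sum_comm

lemma erase_eq_self_of_last_zero {σ : Fin (n+1) →₀ ℕ} (h : σ (Fin.last n) = 0) :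
    σ.erase (Fin.last n) = σ := by
  ext a
  rcases eq_or_ne a (Fin.last n) with rfl | ha
  · rw [Finsupp.erase_same, h]
  · rw [Finsupp.erase_ne ha]

lemma erase_sub_single_last (σ : Fin (n+1) →₀ ℕ) :
    (σ - Finsupp.single (Fin.last n) 1).erase (Fin.last n) = σ.erase (Fin.last n) := by
  ext a
  rcases eq_or_ne a (Fin.last n) with rfl | ha
  · rw [Finsupp.erase_same, Finsupp.erase_same]
  · rw [Finsupp.erase_ne ha, Finsupp.erase_ne ha, Finsupp.tsub_apply,
      Finsupp.single_eq_of_ne' (Ne.symm ha), Nat.sub_zero]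

lemma pderiv_last_Gfun (σ : Fin (n+1) →₀ ℕ) :
    pderiv (R := ℝ) (Fin.last n) (Gfun n σ) =
      ∑ j ∈ Finset.range (Finsupp.degree σ + 1),
        (dcoef n σ j * ((σ (Fin.last n) + 2*j + 2 : ℕ) : ℝ)) •
          ((lapX n ^ j) (monomial (σ.erase (Fin.last n)) (1:ℝ)) *
            X (Fin.last n) ^ (σ (Fin.last n) + 2*j + 1)) := by
  rw [Gfun, map_sum]
  refine Finset.sum_congr rfl fun j _ => ?_
  rw [smul_eq_C_mul, pderiv_C_mul, dmono, pderiv_last_mul_ypow (pderiv_last_P σ j),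
    show (σ (Fin.last n) + 2*j + 2) - 1 = σ (Fin.last n) + 2*j + 1 from by omega,
    ← smul_eq_C_mul, smul_smul]

lemma pderiv_last_deltaDInv_monomial {N : ℕ} (σ : Fin (n+1) →₀ ℕ) (c : ℝ)
    (hσ : Finsupp.degree σ ≤ N) :
    pderiv (R := ℝ) (Fin.last n) (deltaDInv n (monomial σ c)) =
      deltaDInv n (pderiv (R := ℝ) (Fin.last n) (monomial σ c)) +
        myE1 n N (setY0 n (monomial σ c)) := by
  classical
  set l := σ (Fin.last n) with hl
  set T := Finsupp.degree σ with hT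
  have hL : pderiv (R := ℝ) (Fin.last n) (deltaDInv n (monomial σ c)) =
      ∑ j ∈ Finset.range (T + 1),
        (c * (dcoef n σ j * ((l + 2*j + 2 : ℕ) : ℝ))) •
          ((lapX n ^ j) (monomial (σ.erase (Fin.last n)) (1:ℝ)) *
            X (Fin.last n) ^ (l + 2*j + 1)) := by
    rw [deltaDInv_monomial, smul_eq_C_mul, pderiv_C_mul, pderiv_last_Gfun, Finset.mul_sum]
    refine Finset.sum_congr rfl fun j _ => ?_
    rw [← smul_eq_C_mul, smul_smul]
  by_cases hc : l = 0
  · -- no y in the monomial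
    have h1 : pderiv (R := ℝ) (Fin.last n) (monomial σ c) = 0 := by
      rw [pderiv_monomial, ← hl, hc, Nat.cast_zero, mul_zero, monomial_zero]
    rw [h1, deltaDInv_zero, zero_add, setY0_monomial, ← hl, if_pos hc, hL]
    rw [myE1]
    have hmono : (monomial σ c : MvPolynomial (Fin (n+1)) ℝ) = c • monomial σ 1 := by
      rw [smul_monomial, smul_eq_mul, mul_one]
    have herase : σ.erase (Fin.last n) = σ := erase_eq_self_of_last_zero (by rw [← hl]; exact hc)
    have hterm : ∀ j, ((-1:ℝ)^j / ((2*j+1).factorial : ℝ)) •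
        ((lapX n ^ j) (monomial σ c) * X (Fin.last n) ^ (2*j+1)) =
        (c * (dcoef n σ j * ((l + 2*j + 2 : ℕ) : ℝ))) •
          ((lapX n ^ j) (monomial (σ.erase (Fin.last n)) (1:ℝ)) *
            X (Fin.last n) ^ (l + 2*j + 1)) := by
      intro j
      rw [hmono, map_smul, smul_mul_assoc, smul_smul, herase, hc,
        show 0 + 2*j + 1 = 2*j+1 from by omega]
      congr 1
      rw [dcoef, ← hl, hc]
      rw [show 0 + 2*j + 2 = (2*j+1) + 1 from by omega, Nat.factorial_succ (2*j+1)]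
      push_cast [Nat.factorial_zero]
      have hne : ((2*j+1).factorial : ℝ) ≠ 0 := fact_cast_ne_zero _
      field_simp
    rw [Finset.sum_congr rfl (fun j _ => hterm j)]
    refine sum_range_ext _ (B := T + 1) ?_ (by omega) (by omega)
    intro j hj
    have hz : (lapX n ^ j) (monomial (σ.erase (Fin.last n)) (1:ℝ)) = 0 := by
      refine P_eq_zero σ ?_
      have h4 := degree_erase_add σ (Fin.last n)
      omega
    rw [hz, zero_mul, smul_zero]
  · -- monomial contains y
    have hy : setY0 n (monomial σ c) = 0 := by
      rw [setY0_monomial, ← hl, if_neg hc]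
    rw [hy, myE1_zero, add_zero, hL, pderiv_monomial, deltaDInv_monomial]
    have hT' : Finsupp.degree (σ - Finsupp.single (Fin.last n) 1) + 1 = T :=
      degree_sub_single σ (Fin.last n) (by omega)
    have hlast' : (σ - Finsupp.single (Fin.last n) (1:ℕ) : Fin (n+1) →₀ ℕ) (Fin.last n) =
        l - 1 := by
      rw [Finsupp.tsub_apply, Finsupp.single_eq_same, ← hl]
    have hTl : l ≤ T := by rw [hT, hl]; exact Finsupp.le_degree _ σ
    have hco : ∀ j, (c * ((σ (Fin.last n)  : ℕ) : ℝ)) •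
        (dcoef n (σ - Finsupp.single (Fin.last n) 1) j •
          dmono n (σ - Finsupp.single (Fin.last n) 1) j) =
        (c * (dcoef n σ j * ((l + 2*j + 2 : ℕ) : ℝ))) •
          ((lapX n ^ j) (monomial (σ.erase (Fin.last n)) (1:ℝ)) *
            X (Fin.last n) ^ (l + 2*j + 1)) := by
      intro j
      rw [dcoef, dmono, hlast', erase_sub_single_last,
        show l - 1 + 2*j + 2 = l + 2*j + 1 from by omega, smul_smul]
      congr 1
      rw [dcoef, ← hl]
      rw [show l + 2*j + 2 = (l + 2*j + 1) + 1 from by omega,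
        Nat.factorial_succ (l + 2*j + 1),
        show l.factorial = l * (l-1).factorial from by
          rw [show l = (l - 1) + 1 from by omega, Nat.factorial_succ]
          congr 1]
      push_cast [show l - 1 + 1 = l from by omega]
      have hne : ((l + 2*j + 1).factorial : ℝ) ≠ 0 := fact_cast_ne_zero _
      field_simp
    rw [Gfun, Finset.smul_sum, Finset.sum_congr rfl (fun j _ => hco j), hT']
    refine sum_range_ext _ (B := T) ?_ (by omega) (by omega)
    intro j hj
    have hz : (lapX n ^ j) (monomial (σ.erase (Fin.last n)) (1:ℝ)) = 0 := by
      refine P_eq_zero σ ?_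
      have h4 := degree_erase_add σ (Fin.last n)
      omega
    rw [hz, zero_mul, smul_zero]

lemma pderiv_last_deltaDInv {q : MvPolynomial (Fin (n+1)) ℝ} {t N : ℕ}
    (hq : q.IsHomogeneous t) (hN : t ≤ N) :
    pderiv (R := ℝ) (Fin.last n) (deltaDInv n q) =
      deltaDInv n (pderiv (R := ℝ) (Fin.last n) q) + myE1 n N (setY0 n q) := by
  classical
  have e1 : pderiv (R := ℝ) (Fin.last n) (deltaDInv n q) =
      ∑ σ ∈ q.support,
        pderiv (R := ℝ) (Fin.last n) (deltaDInv n (monomial σ (coeff σ q))) := by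
    conv_lhs => rw [q.as_sum]
    rw [deltaDInv_sum, map_sum]
  have e2 : deltaDInv n (pderiv (R := ℝ) (Fin.last n) q) =
      ∑ σ ∈ q.support,
        deltaDInv n (pderiv (R := ℝ) (Fin.last n) (monomial σ (coeff σ q))) := by
    conv_lhs => rw [q.as_sum]
    rw [map_sum, deltaDInv_sum]
  have e3 : myE1 n N (setY0 n q) =
      ∑ σ ∈ q.support, myE1 n N (setY0 n (monomial σ (coeff σ q))) := by
    conv_lhs => rw [q.as_sum]
    rw [map_sum, myE1_sum]
  rw [e1, e2, e3, ← Finset.sum_add_distrib]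
  refine Finset.sum_congr rfl fun σ hσ => ?_
  refine pderiv_last_deltaDInv_monomial σ _ ?_
  have := hq (MvPolynomial.mem_support_iff.mp hσ)
  rw [Pi.one_def, ← Finsupp.degree_eq_weight_one] at this
  omega
lemma lapFull_pderiv (i : Fin (n+1)) (f : MvPolynomial (Fin (n+1)) ℝ) :
    pderiv (R := ℝ) i (lapFull n f) = lapFull n (pderiv (R := ℝ) i f) := by
  rw [lapFull_apply, lapFull_apply, map_add, pderiv_lapX]
  congr 1
  rw [my_pderiv_comm, my_pderiv_comm i]

lemma lapFull_sum_apply (f : MvPolynomial (Fin (n+1)) ℝ) :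
    lapFull n f = ∑ k : Fin (n+1), pderiv (R := ℝ) k (pderiv (R := ℝ) k f) := by
  rw [lapFull_apply, lapX_apply, Fin.sum_univ_castSucc]

section Main
variable {m : ℕ} {p : MvPolynomial (Fin (n+1)) ℝ}

lemma lapFull_Smap (h0 : (0 : Fin (n+1)) ≠ Fin.last n) (hm : 2 ≤ m)
    (hp : p.IsHomogeneous (m-1)) (k : Fin (n+1)) :
    lapFull n (Smap n m p k) = pderiv (R := ℝ) k p := by
  simp only [Smap]
  rw [map_add, lapFull_deltaDInv]
  by_cases hk : k = 0
  · rw [if_pos hk, lapFull_V1 h0 hm hp, add_zero]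
  · rw [if_neg hk, map_zero, add_zero]

lemma isHomog_Smap (hm : 2 ≤ m) (hp : p.IsHomogeneous (m-1)) (k : Fin (n+1)) :
    (Smap n m p k).IsHomogeneous m := by
  simp only [Smap]
  have h1 : (pderiv (R := ℝ) k p).IsHomogeneous (m-1-1) := isHomog_pderiv _ hp
  have h2 := isHomog_deltaDInv (n := n) h1
  rw [show m - 1 - 1 + 2 = m from by omega] at h2
  refine h2.add ?_
  by_cases hk : k = 0
  · rw [if_pos hk]; exact isHomog_V1 hm hp
  · rw [if_neg hk]; exact isHomogeneous_zero _ _ _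

lemma eval0_Smap (x : Fin n → ℝ) (k : Fin (n+1)) :
    eval (Fin.snoc x (0:ℝ)) (Smap n m p k) = 0 := by
  simp only [Smap]
  rw [map_add, eval0_deltaDInv]
  by_cases hk : k = 0
  · rw [if_pos hk, eval0_V1, add_zero]
  · rw [if_neg hk, map_zero, add_zero]

lemma div_Smap (h0 : (0 : Fin (n+1)) ≠ Fin.last n) (hm : 2 ≤ m)
    (hp : p.IsHomogeneous (m-1)) (hΔ : lapFull n p = 0) :
    (∑ k : Fin (n+1), pderiv (R := ℝ) k (Smap n m p k)) = 0 := by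
  have hsplit : ∀ k : Fin (n+1), pderiv (R := ℝ) k (Smap n m p k) =
      pderiv (R := ℝ) k (deltaDInv n (pderiv (R := ℝ) k p)) +
        pderiv (R := ℝ) k (if k = (0 : Fin (n+1)) then V1 n m p else 0) := by
    intro k
    simp only [Smap]
    rw [map_add]
  rw [Finset.sum_congr rfl (fun k _ => hsplit k), Finset.sum_add_distrib]
  have hsecond : ∑ k : Fin (n+1),
      pderiv (R := ℝ) k (if k = (0 : Fin (n+1)) then V1 n m p else 0) =
      pderiv (R := ℝ) (0 : Fin (n+1)) (V1 n m p) := by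
    rw [Finset.sum_eq_single (0 : Fin (n+1))]
    · rw [if_pos rfl]
    · intro k _ hk
      rw [if_neg hk, map_zero]
    · intro habs
      exact absurd (Finset.mem_univ _) habs
  rw [hsecond]
  have hfirst : ∑ k : Fin (n+1),
      pderiv (R := ℝ) k (deltaDInv n (pderiv (R := ℝ) k p)) =
      myE1 n m (setY0 n (pderiv (R := ℝ) (Fin.last n) p)) := by
    rw [Fin.sum_univ_castSucc]
    have hhoriz : ∀ i : Fin n,
        pderiv (R := ℝ) i.castSucc (deltaDInv n (pderiv (R := ℝ) i.castSucc p)) =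
        deltaDInv n (pderiv (R := ℝ) i.castSucc (pderiv (R := ℝ) i.castSucc p)) :=
      fun i => pderiv_horiz_deltaDInv (castSucc_ne_last i) _
    rw [Finset.sum_congr rfl (fun i _ => hhoriz i), ← deltaDInv_sum,
      pderiv_last_deltaDInv (t := m - 1 - 1) (N := m) (isHomog_pderiv _ hp) (by omega),
      ← add_assoc, ← deltaDInv_add, ← lapX_apply, ← lapFull_apply, hΔ, deltaDInv_zero,
      zero_add]
  rw [hfirst, pderiv0_V1 h0, myE1]
  exact add_neg_cancel _

end Main
/-- for `d ≥ 2`, `m ≥ 2`, `Ṡ_m(ℝ^d_+) = V_m^{(1)} ⊕ V_m^{(2)}`: every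
`(u,p) ∈ Ṡ_m(ℝ^d_+)` can be written uniquely as `(u,p) = (S[q],q) + (v,0)` where
`q ∈ 𝒜̇_{m-1}(ℝ^d)` and `(v,0) ∈ Ṡ_m(ℝ^d_+)`. -/
theorem stmt7 (n m : ℕ) (hn : 1 ≤ n) (hm : 2 ≤ m)
    (u : Fin (n + 1) → MvPolynomial (Fin (n + 1)) ℝ)
    (p : MvPolynomial (Fin (n + 1)) ℝ) (h : IsDotStokes n m u p) :
    ∃! qv : MvPolynomial (Fin (n + 1)) ℝ × (Fin (n + 1) → MvPolynomial (Fin (n + 1)) ℝ),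
      qv.1.IsHomogeneous (m - 1) ∧ lapFull n qv.1 = 0 ∧
      IsDotStokes n m qv.2 0 ∧
      p = qv.1 ∧ (∀ k, u k = Smap n m qv.1 k + qv.2 k) := by
  obtain ⟨hU, hP, hEq, hDiv, hBC⟩ := h
  have h0 : (0 : Fin (n+1)) ≠ Fin.last n := by
    intro heq
    have := congrArg Fin.val heq
    simp only [Fin.val_zero, Fin.val_last] at this
    omega
  have hgrad : ∀ k, pderiv (R := ℝ) k p = lapFull n (u k) := by
    intro k
    have h1 := hEq k
    rw [neg_add_eq_sub, sub_eq_zero] at h1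
    exact h1
  have hLapP : lapFull n p = 0 := by
    rw [lapFull_sum_apply]
    have hterm : ∀ k : Fin (n+1), pderiv (R := ℝ) k (pderiv (R := ℝ) k p) =
        lapFull n (pderiv (R := ℝ) k (u k)) := by
      intro k
      rw [hgrad k, lapFull_pderiv]
    rw [Finset.sum_congr rfl (fun k _ => hterm k), ← map_sum, hDiv, map_zero]
  refine ⟨⟨p, fun k => u k - Smap n m p k⟩, ⟨hP, hLapP, ?_, rfl, fun k => by ring⟩, ?_⟩
  · -- (v, 0) is a Stokes pair
    refine ⟨fun k => (hU k).sub (isHomog_Smap hm hP k), isHomogeneous_zero _ _ _, ?_, ?_, ?_⟩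
    · intro k
      rw [map_sub, lapFull_Smap h0 hm hP, ← hgrad k, sub_self, neg_zero, map_zero, add_zero]
    · have : ∀ k : Fin (n+1),
          pderiv (R := ℝ) k (u k - Smap n m p k) =
            pderiv (R := ℝ) k (u k) - pderiv (R := ℝ) k (Smap n m p k) :=
        fun k => map_sub _ _ _
      rw [Finset.sum_congr rfl (fun k _ => this k), Finset.sum_sub_distrib, hDiv,
        div_Smap h0 hm hP hLapP, sub_zero]
    · intro x k
      rw [map_sub, hBC, eval0_Smap, sub_zero]
  · -- uniqueness
    rintro ⟨q, v⟩ ⟨hq1, hq2, hq3, hpq, hv⟩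
    subst hpq
    refine Prod.ext rfl ?_
    funext k
    show v k = u k - Smap n m p k
    have hv' : u k = Smap n m p k + v k := hv k
    rw [hv']
    ring
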